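/- arXiv:2109.01597 — 3 statements merged into one kernel-verified Lean document; each statement's English description precedes it below -/
import Mathlib

section
/- For every integer m ≥ 3, there exists an m-gonal form ⟨a₁,…,aₙ⟩_m (for some n and some positive integers a₁,…,aₙ) that represents over ℕ₀ every positive integer strictly less than m but is not universal over ℕ₀. Consequently, the minimal γ such that representability over ℕ₀ of 1,…,γ implies universality over ℕ₀ satisfies γ ≥ m. -/
/-- The `x`-th `m`-gonal number `P_m(x) = ((m-2)/2)(x² - x) + x`.
Since `x * (x - 1)` is always even, the integer division by `2` is exact. -/
def polyNum (m x : ℤ) : ℤ := (m - 2) * (x * (x - 1)) / 2 + x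

lemma two_mul_polyNum (m x : ℤ) : 2 * polyNum m x = (m - 2) * (x * (x - 1)) + 2 * x := by
  have hev : Even (x * (x - 1)) := by
    rw [mul_comm]; simpa using Int.even_mul_succ_self (x - 1)
  obtain ⟨k, hk⟩ := hev
  unfold polyNum
  rw [hk]
  have : (m - 2) * (k + k) = 2 * ((m - 2) * k) := by ring
  rw [this, Int.mul_ediv_cancel_left _ (by norm_num)]
  ring

lemma polyNum_zero (m : ℤ) : polyNum m 0 = 0 := by
  have := two_mul_polyNum m 0; omega

lemma polyNum_one (m : ℤ) : polyNum m 1 = 1 := by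
  have := two_mul_polyNum m 1; nlinarith [this]

lemma polyNum_two (m : ℤ) : polyNum m 2 = m := by
  have := two_mul_polyNum m 2; nlinarith [this]

lemma polyNum_nonneg (m x : ℤ) (hm : 2 ≤ m) (hx : 0 ≤ x) : 0 ≤ polyNum m x := by
  have h := two_mul_polyNum m x
  have hxx : 0 ≤ x * (x - 1) := by
    rcases le_or_gt 1 x with h1 | h1
    · exact mul_nonneg (by omega) (by omega)
    · have hx0 : x = 0 := by omega
      simp [hx0]
  nlinarith [h, hxx]

lemma polyNum_big (m x : ℤ) (hm : 3 ≤ m) (hx : 3 ≤ x) : 3 * m - 3 ≤ polyNum m x := by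
  have h := two_mul_polyNum m x
  have hxx : 6 ≤ x * (x - 1) := by nlinarith
  nlinarith [h, hxx]

/-- The key construction: the form with `m - 1` coefficients all equal to 1 represents
every `0 < N < m` but does not represent `2m - 1`. -/
lemma key (m : ℤ) (hm : 3 ≤ m) :
    (∀ N : ℤ, 0 < N → N < m →
      ∃ x : Fin (m - 1).toNat → ℕ,
        ∑ i, (1 : ℤ) * polyNum m ((x i : ℤ)) = N) ∧
    ¬ ∃ x : Fin (m - 1).toNat → ℕ,
        ∑ i, (1 : ℤ) * polyNum m ((x i : ℤ)) = 2 * m - 1 := by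
  set n : ℕ := (m - 1).toNat with hn
  have hnm : (n : ℤ) = m - 1 := Int.toNat_of_nonneg (by omega)
  constructor
  · intro N hN1 hN2
    refine ⟨fun i => if (i : ℕ) < N.toNat then 1 else 0, ?_⟩
    have hNn : N.toNat ≤ n := by omega
    have h1 : ∀ i : Fin n, (1 : ℤ) * polyNum m (((if (i : ℕ) < N.toNat then 1 else 0 : ℕ) : ℤ))
        = if (i : ℕ) < N.toNat then 1 else 0 := by
      intro i
      split <;> simp [polyNum_one, polyNum_zero]
    rw [Finset.sum_congr rfl fun i _ => h1 i]
    rw [Fin.sum_univ_eq_sum_range (fun j => if j < N.toNat then (1 : ℤ) else 0) n]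
    rw [Finset.sum_boole]
    have hfil : (Finset.range n).filter (fun i => i < N.toNat) = Finset.range N.toNat := by
      ext a; simp; omega
    rw [hfil, Finset.card_range]
    omega
  · rintro ⟨x, hx⟩
    simp only [one_mul] at hx
    -- every x i is at most 2
    have hxle : ∀ i, x i ≤ 2 := by
      intro i
      by_contra h
      push_neg at h
      have hbig : 3 * m - 3 ≤ polyNum m (x i : ℤ) := polyNum_big m _ hm (by exact_mod_cast h)
      have hle : polyNum m (x i : ℤ) ≤ 2 * m - 1 := by
        rw [← hx]
        exact Finset.single_le_sum (fun j _ => polyNum_nonneg m _ (by omega) (by positivity))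
          (Finset.mem_univ i)
      omega
    -- count the number of variables equal to 2
    set c : ℤ := ∑ i : Fin n, (if x i = 2 then (1 : ℤ) else 0) with hc
    have hc0 : 0 ≤ c := Finset.sum_nonneg fun i _ => by split <;> norm_num
    have hlow : m * c ≤ 2 * m - 1 := by
      rw [← hx, hc, Finset.mul_sum]
      refine Finset.sum_le_sum fun i _ => ?_
      rcases Nat.lt_or_ge (x i) 2 with h2 | h2
      · interval_cases h : x i <;> simp [polyNum_zero, polyNum_one]
      · have : x i = 2 := le_antisymm (hxle i) h2
        simp [this, polyNum_two]
    have hupp : 2 * m - 1 ≤ (n : ℤ) + (m - 1) * c := by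
      rw [← hx, hc, Finset.mul_sum]
      have hrw : (n : ℤ) + ∑ i : Fin n, (m - 1) * (if x i = 2 then (1:ℤ) else 0)
          = ∑ i : Fin n, (1 + (m - 1) * (if x i = 2 then (1:ℤ) else 0)) := by
        rw [Finset.sum_add_distrib]
        simp
      rw [hrw]
      refine Finset.sum_le_sum fun i _ => ?_
      have h2 := hxle i
      interval_cases h : x i <;> simp [polyNum_zero, polyNum_one, polyNum_two]
    have hc1 : c ≤ 1 := by nlinarith
    nlinarith

/-- for every `m ≥ 3` there is an `m`-gonal form representing (over `ℕ₀`)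
every positive integer `< m` but not universal over `ℕ₀`; consequently any `γ` such that
representability of `1, …, γ` over `ℕ₀` implies universality over `ℕ₀` satisfies `γ ≥ m`. -/
theorem stmt2 (m : ℤ) (hm : 3 ≤ m) :
    (∃ (n : ℕ) (a : Fin n → ℤ), (∀ i, 0 < a i) ∧
      (∀ N : ℤ, 0 < N → N < m →
        ∃ x : Fin n → ℕ, ∑ i, a i * polyNum m ((x i : ℤ)) = N) ∧
      ¬ (∀ N : ℤ, 0 < N → ∃ x : Fin n → ℕ, ∑ i, a i * polyNum m ((x i : ℤ)) = N)) ∧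
    ∀ γ : ℤ, 0 < γ →
      (∀ (n : ℕ) (a : Fin n → ℤ), (∀ i, 0 < a i) →
        (∀ N : ℤ, 1 ≤ N → N ≤ γ →
          ∃ x : Fin n → ℕ, ∑ i, a i * polyNum m ((x i : ℤ)) = N) →
        ∀ N : ℤ, 0 < N → ∃ x : Fin n → ℕ, ∑ i, a i * polyNum m ((x i : ℤ)) = N) →
      m ≤ γ := by
  obtain ⟨hrep, hnu⟩ := key m hm
  refine ⟨⟨(m - 1).toNat, fun _ => 1, fun i => one_pos, hrep,
    fun h => hnu (h (2 * m - 1) (by omega))⟩, ?_⟩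
  intro γ hγ H
  by_contra hlt
  push_neg at hlt
  exact hnu (H (m - 1).toNat (fun _ => 1) (fun i => one_pos)
    (fun N h1 h2 => hrep N (by omega) (by omega)) (2 * m - 1) (by omega))
end

section
/- Let m ≥ 3 be an integer, let a₁,…,aₙ be positive integers, let p be a prime, and let A and B be integers. The equation a₁P_m(x₁)+⋯+aₙP_m(xₙ) = A(m−2)+B has a solution (x₁,…,xₙ) ∈ ℤ_pⁿ in the p-adic integers if and only if there exists k ∈ ℤ_p such that the system a₁x₁²+⋯+aₙxₙ² = 2A+B+k(m−4) and a₁x₁+⋯+aₙxₙ = B+k(m−2) has a solution (x₁,…,xₙ) ∈ ℤ_pⁿ. -/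
/-- In `ℤ_[p]`, `2` divides `y² - y` for every `y`. -/
lemma two_dvd_sq_sub_self {p : ℕ} [Fact p.Prime] (y : ℤ_[p]) :
    (2 : ℤ_[p]) ∣ y ^ 2 - y := by
  rcases eq_or_ne p 2 with hp | hp
  · subst hp
    have h0 : PadicInt.toZMod (y ^ 2 - y) = 0 := by
      have : (PadicInt.toZMod y) ^ 2 - PadicInt.toZMod y = 0 := by
        rw [ZMod.pow_card (PadicInt.toZMod y), sub_self]
      simpa [map_sub, map_pow] using this
    have hmem : y ^ 2 - y ∈ RingHom.ker (PadicInt.toZMod : ℤ_[2] →+* ZMod 2) :=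
      RingHom.mem_ker.mpr h0
    rw [PadicInt.ker_toZMod, PadicInt.maximalIdeal_eq_span_p,
      Ideal.mem_span_singleton] at hmem
    simpa using hmem
  · have hu : IsUnit (2 : ℤ_[p]) := by
      rw [PadicInt.isUnit_iff]
      have hle : ‖((2 : ℤ) : ℤ_[p])‖ ≤ 1 := PadicInt.norm_le_one _
      have hnlt : ¬ ‖((2 : ℤ) : ℤ_[p])‖ < 1 := by
        rw [PadicInt.norm_int_lt_one_iff_dvd]
        intro hdvd
        have hpd : p ∣ 2 := by exact_mod_cast hdvd
        exact hp ((Nat.prime_dvd_prime_iff_eq Fact.out Nat.prime_two).mp hpd)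
      push_cast at hle hnlt
      linarith [lt_or_eq_of_le hle]
    exact hu.dvd

/-- over the `p`-adic integers, `Σ aᵢ P_m(xᵢ) = A(m-2)+B` is solvable iff for some
`k ∈ ℤ_p` the system `Σ aᵢxᵢ² = 2A+B+k(m-4)`, `Σ aᵢxᵢ = B+k(m-2)` is solvable in `ℤ_p`.
Since `2` need not be invertible in `ℤ_p`, the `m`-gonal equation is stated multiplied by `2`
(an equivalent formulation, `2` being a nonzerodivisor): `Σ aᵢ((m-2)(xᵢ²-xᵢ)+2xᵢ) = 2(A(m-2)+B)`. -/
theorem stmt6 (m : ℤ) (hm : 3 ≤ m) (n : ℕ) (a : Fin n → ℤ) (ha : ∀ i, 0 < a i)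
    (p : ℕ) [Fact p.Prime] (A B : ℤ) :
    (∃ x : Fin n → ℤ_[p],
        ∑ i, (a i : ℤ_[p]) * (((m : ℤ_[p]) - 2) * ((x i) ^ 2 - x i) + 2 * x i)
          = 2 * ((A * (m - 2) + B : ℤ) : ℤ_[p])) ↔
      ∃ (k : ℤ_[p]) (x : Fin n → ℤ_[p]),
        (∑ i, (a i : ℤ_[p]) * (x i) ^ 2
            = ((2 * A + B : ℤ) : ℤ_[p]) + k * ((m : ℤ_[p]) - 4)) ∧
        (∑ i, (a i : ℤ_[p]) * x i = ((B : ℤ) : ℤ_[p]) + k * ((m : ℤ_[p]) - 2)) := by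
  have h2 : (2 : ℤ_[p]) ≠ 0 := two_ne_zero
  constructor
  · rintro ⟨x, hx⟩
    have hdvd : (2 : ℤ_[p]) ∣ ∑ i, (a i : ℤ_[p]) * ((x i) ^ 2 - x i) :=
      Finset.dvd_sum fun i _ => (two_dvd_sq_sub_self (x i)).mul_left _
    obtain ⟨c, hc⟩ := hdvd
    set Q := ∑ i, (a i : ℤ_[p]) * (x i) ^ 2 with hQ
    set S := ∑ i, (a i : ℤ_[p]) * x i with hS
    have hQS : Q - S = 2 * c := by
      rw [← hc, hQ, hS, ← Finset.sum_sub_distrib]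
      exact Finset.sum_congr rfl fun i _ => by ring
    have hexp : ∑ i, (a i : ℤ_[p]) * (((m : ℤ_[p]) - 2) * ((x i) ^ 2 - x i) + 2 * x i)
        = ((m : ℤ_[p]) - 2) * (2 * c) + 2 * S := by
      rw [← hc, hS, Finset.mul_sum, Finset.mul_sum, ← Finset.sum_add_distrib]
      exact Finset.sum_congr rfl fun i _ => by ring
    rw [hexp] at hx
    push_cast at hx
    refine ⟨(A : ℤ_[p]) - c, x, ?_, ?_⟩
    · rw [← hQ]
      have hSval : S = (B : ℤ_[p]) + ((A : ℤ_[p]) - c) * ((m : ℤ_[p]) - 2) := by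
        apply mul_left_cancel₀ h2
        linear_combination hx
      push_cast
      linear_combination hSval + hQS
    · rw [← hS]
      apply mul_left_cancel₀ h2
      push_cast
      linear_combination hx
  · rintro ⟨k, x, h1, h2'⟩
    refine ⟨x, ?_⟩
    have hexp : ∑ i, (a i : ℤ_[p]) * (((m : ℤ_[p]) - 2) * ((x i) ^ 2 - x i) + 2 * x i)
        = ((m : ℤ_[p]) - 2) * ((∑ i, (a i : ℤ_[p]) * (x i) ^ 2) - ∑ i, (a i : ℤ_[p]) * x i)
          + 2 * ∑ i, (a i : ℤ_[p]) * x i := by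
      simp only [Finset.mul_sum, ← Finset.sum_sub_distrib, ← Finset.sum_add_distrib]
      exact Finset.sum_congr rfl fun i _ => by ring
    rw [hexp]
    push_cast at h1 h2' ⊢
    linear_combination ((m : ℤ_[p]) - 2) * h1 + (4 - (m : ℤ_[p])) * h2'
end

section
/- Let m ≥ 3 be an integer and let a₁,…,aₙ be positive integers with gcd(a₁,…,aₙ) = 1 (a primitive m-gonal form). If p is an odd prime dividing m−2, then for every N ∈ ℤ_p the equation a₁P_m(x₁)+⋯+aₙP_m(xₙ) = N has a solution (x₁,…,xₙ) ∈ ℤ_pⁿ; that is, ⟨a₁,…,aₙ⟩_m is universal over ℤ_p. -/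
/-!
Since the form is primitive, some coefficient `a i` is prime to `p`, hence a `p`-adic unit, and
with all other variables set to `0` it suffices to solve
`a i * ((m - 2) * (x ^ 2 - x) + 2 * x) = 2 * N` in the single variable `x = x i`.
Because `p ∣ m - 2` and `p` is odd, this quadratic is `c x ^ 2 + u x = 2 N` with `c ≡ 0` and `u`
a unit modulo `p`; its reduction is linear with a simple root, which Hensel's lemma lifts to `ℤ_p`.
-/

theorem Finset.exists_not_dvd_of_gcd_eq_one {ι α : Type*} [CommMonoidWithZero α]
    [NormalizedGCDMonoid α] {s : Finset ι} {f : ι → α} (h : s.gcd f = 1) {d : α}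
    (hd : ¬IsUnit d) : ∃ i ∈ s, ¬d ∣ f i := by
  by_contra! H
  exact hd (isUnit_of_dvd_one (h ▸ Finset.dvd_gcd H))

namespace PadicInt

variable {p : ℕ} [Fact p.Prime]

theorem isUnit_intCast_iff {k : ℤ} : IsUnit (k : ℤ_[p]) ↔ ¬(p : ℤ) ∣ k := by
  rw [← norm_intCast_lt_one_iff, ← not_isUnit_iff, not_not]

theorem norm_mul_lt_one_of_left {c : ℤ_[p]} (hc : ‖c‖ < 1) (y : ℤ_[p]) : ‖c * y‖ < 1 := by
  rw [norm_mul]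
  exact mul_lt_one_of_nonneg_of_lt_one_left (norm_nonneg c) hc (norm_le_one y)

theorem isUnit_add_of_norm_lt_one {u c : ℤ_[p]} (hu : IsUnit u) (hc : ‖c‖ < 1) :
    IsUnit (u + c) := by
  rw [isUnit_iff] at hu ⊢
  rw [norm_add_eq_max_of_ne (by rw [hu]; exact hc.ne'), hu, max_eq_left hc.le]

open Polynomial in
theorem exists_mul_sq_add_mul_eq {c u : ℤ_[p]} (hc : ‖c‖ < 1) (hu : IsUnit u) (b : ℤ_[p]) :
    ∃ x, c * x ^ 2 + u * x = b := by
  obtain ⟨v, rfl⟩ := hu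
  set F : ℤ_[p][X] := C c * X ^ 2 + C (v : ℤ_[p]) * X - C b
  set x₀ := ↑v⁻¹ * b
  have hF (x : ℤ_[p]) : F.aeval x = c * x ^ 2 + v * x - b := by simp [F]
  have hF' (x : ℤ_[p]) : F.derivative.aeval x = c * (2 * x) + v := by
    simp [F, one_add_one_eq_two]
  have hF'x₀ : ‖F.derivative.aeval x₀‖ = 1 := by
    rw [hF', add_comm, ← isUnit_iff]
    exact isUnit_add_of_norm_lt_one v.isUnit (norm_mul_lt_one_of_left hc _)
  have hFx₀ : ‖F.aeval x₀‖ < ‖F.derivative.aeval x₀‖ ^ 2 := by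
    rw [hF'x₀, one_pow, hF, Units.mul_inv_cancel_left, add_sub_cancel_right]
    exact norm_mul_lt_one_of_left hc _
  obtain ⟨x, hx, -⟩ := hensels_lemma hFx₀
  exact ⟨x, by rw [hF] at hx; exact sub_eq_zero.1 hx⟩

end PadicInt

open PadicInt in
theorem stmt9_general (m : ℤ) (n : ℕ) (a : Fin n → ℤ)
    (hprim : Finset.univ.gcd a = 1)
    (p : ℕ) [Fact p.Prime] (hodd : p ≠ 2) (hdvd : (p : ℤ) ∣ m - 2) :
    ∀ N : ℤ_[p],
      ∃ x : Fin n → ℤ_[p],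
        ∑ i, (a i : ℤ_[p]) * (((m : ℤ_[p]) - 2) * ((x i) ^ 2 - x i) + 2 * x i)
          = 2 * N := by
  intro N
  have hp : Prime (p : ℤ) := Nat.prime_iff_prime_int.1 Fact.out
  obtain ⟨i, -, hi⟩ := Finset.exists_not_dvd_of_gcd_eq_one hprim hp.not_isUnit
  have hA : IsUnit (a i : ℤ_[p]) := isUnit_intCast_iff.2 hi
  have hM : ‖(m : ℤ_[p]) - 2‖ < 1 := by exact_mod_cast norm_intCast_lt_one_iff.2 hdvd
  have h2 : IsUnit (2 : ℤ_[p]) := by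
    refine isUnit_intCast_iff.2 fun h ↦ hodd ?_
    exact (Nat.prime_dvd_prime_iff_eq Fact.out Nat.prime_two).1 (by exact_mod_cast h)
  have hu : IsUnit ((a i : ℤ_[p]) * (2 + -((m : ℤ_[p]) - 2))) :=
    hA.mul (isUnit_add_of_norm_lt_one h2 (by rwa [norm_neg]))
  have hc : ‖(a i : ℤ_[p]) * ((m : ℤ_[p]) - 2)‖ < 1 := by
    rw [mul_comm]; exact norm_mul_lt_one_of_left hM _
  obtain ⟨z, hz⟩ := exists_mul_sq_add_mul_eq hc hu (2 * N)
  refine ⟨Pi.single i z, ?_⟩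
  rw [Finset.sum_eq_single i (fun j _ hj ↦ by simp [hj]) (by simp), Pi.single_eq_same, ← hz]
  ring

/-- a primitive `m`-gonal form is universal over `ℤ_p` for any odd prime `p`
dividing `m - 2`.  The `m`-gonal equation is stated multiplied by `2`
(an equivalent formulation, since `2` is a nonzerodivisor in `ℤ_p`). -/
theorem stmt9 (m : ℤ) (hm : 3 ≤ m) (n : ℕ) (a : Fin n → ℤ) (ha : ∀ i, 0 < a i)
    (hprim : Finset.univ.gcd a = 1)
    (p : ℕ) [Fact p.Prime] (hodd : p ≠ 2) (hdvd : (p : ℤ) ∣ m - 2) :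
    ∀ N : ℤ_[p],
      ∃ x : Fin n → ℤ_[p],
        ∑ i, (a i : ℤ_[p]) * (((m : ℤ_[p]) - 2) * ((x i) ^ 2 - x i) + 2 * x i)
          = 2 * N :=
  stmt9_general m n a hprim p hodd hdvd
end
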